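/- The four-index qutrit tensor defined by |Ψ⟩ = Σ_{i=0}^{2} |i⟩⊗|i_L⟩, where |i_L⟩ are the three-qutrit code states, is a perfect tensor: for every bipartition of its four legs into two pairs, the induced map ℂ³⊗ℂ³ → ℂ³⊗ℂ³ is proportional to a unitary. -/
import Mathlib


open Matrix Kronecker BigOperators MeasureTheory

/-- Von Neumann entropy of a matrix (via eigenvalues of a Hermitian matrix). -/
noncomputable def vNEntropy {n : Type*} [Fintype n] [DecidableEq n] (ρ : Matrix n n ℂ) : ℝ :=
  if h : ρ.IsHermitian then -∑ i, h.eigenvalues i * Real.log (h.eigenvalues i) else 0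

/-- Partial trace over the second (right) tensor factor. -/
noncomputable def ptraceR {a b : Type*} [Fintype b] (ρ : Matrix (a × b) (a × b) ℂ) :
    Matrix a a ℂ := Matrix.of fun i j => ∑ k, ρ (i, k) (j, k)

/-- Partial trace over the first (left) tensor factor. -/
noncomputable def ptraceL {a b : Type*} [Fintype a] (ρ : Matrix (a × b) (a × b) ℂ) :
    Matrix b b ℂ := Matrix.of fun i j => ∑ k, ρ (k, i) (k, j)

/-- Outer product |v⟩⟨w|. -/
def outer {n : Type*} (v w : n → ℂ) : Matrix n n ℂ := Matrix.of fun i j => v i * star (w j)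
/-- Merge an assignment on the legs in `S` with one on the complementary legs. -/
def mergeLegs {N D : ℕ} (S : Finset (Fin N))
    (g : {i // i ∈ S} → Fin D) (f : {i // i ∉ S} → Fin D) : Fin N → Fin D :=
  fun i => if h : i ∈ S then g ⟨i, h⟩ else f ⟨i, h⟩

/-- The matrix of a tensor `T`, viewed as a linear map from the legs in `S`
to the complementary legs. -/
def cutMat {N D : ℕ} (T : (Fin N → Fin D) → ℂ) (S : Finset (Fin N)) :
    Matrix ({i // i ∉ S} → Fin D) ({i // i ∈ S} → Fin D) ℂ :=
  Matrix.of fun f g => T (mergeLegs S g f)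

/-- The four-index qutrit tensor `|Ψ⟩ = Σ_i |i⟩ ⊗ |i_L⟩`, where `|i_L⟩` are the
three-qutrit code states: its component at `(i, a, b, c)` is `1/√3` when
`b = a + i` and `c = a + 2i` (mod 3), else `0`. -/
noncomputable def qutritTensor : (Fin 4 → Fin 3) → ℂ :=
  fun f => if f 2 = f 1 + f 0 ∧ f 3 = f 1 + f 0 + f 0 then (Real.sqrt 3 : ℂ)⁻¹ else 0


/-- Integer version of the qutrit tensor (no normalization). -/
def T0 : (Fin 4 → Fin 3) → ℤ :=
  fun f => if f 2 = f 1 + f 0 ∧ f 3 = f 1 + f 0 + f 0 then 1 else 0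

/-- Integer version of `cutMat qutritTensor`. -/
def cutMatZ (S : Finset (Fin 4)) :
    Matrix ({i // i ∉ S} → Fin 3) ({i // i ∈ S} → Fin 3) ℤ :=
  Matrix.of fun f g => T0 (mergeLegs S g f)

theorem keyZ : ∀ S : Finset (Fin 4), S.card = 2 →
    (cutMatZ S)ᵀ * cutMatZ S = 1 ∧ cutMatZ S * (cutMatZ S)ᵀ = 1 := by decide

theorem cutMat_eq (S : Finset (Fin 4)) :
    cutMat qutritTensor S
      = ((Real.sqrt 3 : ℂ))⁻¹ • (cutMatZ S).map (Int.castRingHom ℂ) := by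
  ext f g
  simp only [cutMat, cutMatZ, qutritTensor, T0, Matrix.of_apply, Matrix.smul_apply,
    Matrix.map_apply, smul_eq_mul]
  split <;> simp

theorem star_smul_self :
    star ((Real.sqrt 3 : ℂ))⁻¹ * ((Real.sqrt 3 : ℂ))⁻¹ = (((1:ℝ)/3 : ℝ) : ℂ) := by
  rw [show (star ((Real.sqrt 3 : ℂ))⁻¹) = ((Real.sqrt 3 : ℂ))⁻¹ by
    rw [← Complex.ofReal_inv]; exact Complex.conj_ofReal _]
  rw [← mul_inv, ← Complex.ofReal_mul, Real.mul_self_sqrt (by norm_num)]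
  push_cast
  norm_num

theorem conjT_map (S : Finset (Fin 4)) :
    ((cutMatZ S).map (Int.castRingHom ℂ))ᴴ = ((cutMatZ S)ᵀ).map (Int.castRingHom ℂ) := by
  ext f g
  simp [Matrix.conjTranspose_apply]

/-- The four-index qutrit tensor is perfect: for every bipartition of its four legs into
two pairs, the induced map is proportional to a unitary. -/
theorem qutritTensor_perfect :
    ∀ S : Finset (Fin 4), S.card = 2 →
      ∃ c : ℝ, 0 < c ∧
        (cutMat qutritTensor S)ᴴ * cutMat qutritTensor S = (c : ℂ) • 1 ∧
        cutMat qutritTensor S * (cutMat qutritTensor S)ᴴ = (c : ℂ) • 1 := by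
  intro S hS
  refine ⟨1/3, by norm_num, ?_, ?_⟩
  · rw [cutMat_eq, Matrix.conjTranspose_smul, Matrix.smul_mul, Matrix.mul_smul, smul_smul,
      star_smul_self, conjT_map, ← Matrix.map_mul, (keyZ S hS).1]
    simp
  · rw [cutMat_eq, Matrix.conjTranspose_smul, Matrix.smul_mul, Matrix.mul_smul, smul_smul,
      mul_comm, star_smul_self, conjT_map, ← Matrix.map_mul, (keyZ S hS).2]
    simp
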